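/- arXiv:1008.2421 — 2 statements merged into one kernel-verified Lean document; each statement's English description precedes it below -/
import Mathlib

section
/- Suppose θ* ∈ W^{m,2} maximizes pqll over W^{m,2} and θ* has the natural-spline structure described in the context. Then for every k ∈ {1, …, n} and every y ∈ [y_k, y_{k+1}) (with the convention y_{n+1} = +∞), θ*^{(2m−1)}(y) = ((−1)^m / (n λ)) ( k − ∑_{j=1}^k r_j² exp(2 θ*(y_j)) ). -/
/-!
Perturbing `θ*` by `t • h` for a smooth compactly supported `h` and differentiating `pqll` at
`t = 0` gives the Euler–Lagrange identity
`(1/n) ∑ⱼ (1 - rⱼ² e^{2θ*(yⱼ)}) h(yⱼ) = λ ∫ θ*^{(m)} h^{(m)}`.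
Integrating the right-hand side by parts `m` times (the first time using only that `θ*^{(m-1)}` is
absolutely continuous) brings it to `∫ θ*^{(2m-2)} h''`; since `θ*^{(2m-2)}` is continuous and
piecewise affine with slope `cₖ = θ*^{(2m-1)}` on `[yₖ, yₖ₊₁)` and `c₀ = 0`, one more integration
by parts and a summation by parts give `(-1)^{m-1} λ ∑ⱼ (cⱼ₋₁ - cⱼ) h(yⱼ)`. Testing with `h` equal
to `1` at `yⱼ` and `0` at the other knots yields the jump `cⱼ - cⱼ₋₁`, and summing the jumps gives
the formula.
-/

open MeasureTheory Real Filter Set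

/-- The weighted quasi-log-likelihood. -/
noncomputable def qll (n : ℕ) (y r : ℕ → ℝ) (θ : ℝ → ℝ) : ℝ :=
  (1 / n) * ∑ j ∈ Finset.Icc 1 n,
    (θ (y j) - (1 / 2) * (r j) ^ 2 * Real.exp (2 * θ (y j)))

/-- `MemW m f g` says that `f` belongs to `W^{m,2}`: `f^{(m-1)}` exists everywhere
(so `f` is `C^{m-1}`) and is absolutely continuous with a.e. (locally integrable)
derivative `g`, which is square-integrable over `ℝ`; `g` is a version of `f^{(m)}`. -/
def MemW (m : ℕ) (f g : ℝ → ℝ) : Prop :=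
  ContDiff ℝ (m - 1 : ℕ) f ∧
  LocallyIntegrable g volume ∧
  (∀ x : ℝ, iteratedDeriv (m - 1) f x =
      iteratedDeriv (m - 1) f 0 + ∫ t in (0 : ℝ)..x, g t) ∧
  MemLp g 2 volume

/-- The penalized quasi-log-likelihood, where `g` is (a version of) `θ^{(m)}`. -/
noncomputable def pqll (n : ℕ) (y r : ℕ → ℝ) (lam : ℝ) (θ g : ℝ → ℝ) : ℝ :=
  qll n y r θ - (lam / 2) * ∫ z : ℝ, (g z) ^ 2

/-- `NatSpline n m y θ g` encodes the natural-spline structure of `θ` with knots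
`y 1 < ⋯ < y n`, where `g` is the right-continuous version of `θ^{(2m−1)}`:
`θ` is `2m−2` times continuously differentiable; it coincides with a polynomial of
degree at most `2m−1` on each of the open intervals `(−∞, y 1)`,
`(y k, y (k+1))` for `k = 1, …, n−1`, and `(y n, ∞)`; its derivatives of orders
`m, …, 2m−1` vanish on `(−∞, y 1)` and `(y n, ∞)`; `g` agrees with the genuine
`(2m−1)`-th derivative of `θ` away from the knots; and `g` is constant on each
interval `[y k, y (k+1))` (with the convention `y (n+1) = +∞`). -/
def NatSpline (n m : ℕ) (y : ℕ → ℝ) (θ g : ℝ → ℝ) : Prop :=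
  ContDiff ℝ (2 * m - 2 : ℕ) θ ∧
  (∃ p : Polynomial ℝ, p.natDegree ≤ 2 * m - 1 ∧ ∀ x, x < y 1 → θ x = p.eval x) ∧
  (∀ k, 1 ≤ k → k < n → ∃ p : Polynomial ℝ, p.natDegree ≤ 2 * m - 1 ∧
      ∀ x, y k < x → x < y (k + 1) → θ x = p.eval x) ∧
  (∃ p : Polynomial ℝ, p.natDegree ≤ 2 * m - 1 ∧ ∀ x, y n < x → θ x = p.eval x) ∧
  (∀ i, m ≤ i → i ≤ 2 * m - 2 → ∀ x, (x < y 1 ∨ y n < x) → iteratedDeriv i θ x = 0) ∧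
  (∀ x, (x < y 1 ∨ y n < x) → g x = 0) ∧
  (∀ x, (∀ k, 1 ≤ k → k ≤ n → x ≠ y k) → g x = iteratedDeriv (2 * m - 1) θ x) ∧
  (∀ k, 1 ≤ k → k ≤ n → ∀ x, y k ≤ x → (k < n → x < y (k + 1)) → g x = g (y k))

open scoped Topology ContDiff

theorem HasCompactSupport.iteratedDeriv {f : ℝ → ℝ} (hf : HasCompactSupport f) (k : ℕ) :
    HasCompactSupport (iteratedDeriv k f) := by
  induction k with
  | zero => simpa using hf
  | succ k ih => simpa only [iteratedDeriv_succ] using ih.deriv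

theorem iteratedDeriv_eq_zero_of_notMem_tsupport {f : ℝ → ℝ} {x : ℝ} (hx : x ∉ tsupport f)
    (k : ℕ) : iteratedDeriv k f x = 0 := by
  induction k generalizing f with
  | zero => simpa using image_eq_zero_of_notMem_tsupport hx
  | succ k ih =>
    rw [iteratedDeriv_succ']
    exact ih fun hx' => hx (tsupport_deriv_subset hx')

theorem ContDiff.hasDerivAt_iteratedDeriv {f : ℝ → ℝ} {n : WithTop ℕ∞} {k : ℕ}
    (hf : ContDiff ℝ n f) (hk : k < n) (x : ℝ) :
    HasDerivAt (iteratedDeriv k f) (iteratedDeriv (k + 1) f x) x := by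
  rw [iteratedDeriv_succ]
  exact ((hf.differentiable_iteratedDeriv k hk) x).hasDerivAt

theorem exists_contDiff_tsupport_subset_apply_eq_ite {E ι : Type*} [NormedAddCommGroup E]
    [NormedSpace ℝ E] [FiniteDimensional ℝ E] [DecidableEq ι] {s : Finset ι} {y : ι → E}
    (hy : InjOn y s) {U : Set E} (hU : IsOpen U) {i : ι} (hi : i ∈ s) (hyU : y i ∈ U) :
    ∃ h : E → ℝ, ContDiff ℝ ∞ h ∧ HasCompactSupport h ∧ tsupport h ⊆ U ∧
      ∀ k ∈ s, h (y k) = if k = i then 1 else 0 := by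
  have hS : IsClosed (y '' (s.erase i : Set ι)) := ((s.erase i).finite_toSet.image y).isClosed
  have hiS : y i ∉ y '' (s.erase i : Set ι) := by
    rintro ⟨k, hk, hki⟩
    exact Finset.ne_of_mem_erase hk (hy (Finset.mem_of_mem_erase hk) hi hki)
  obtain ⟨h, hsub, hcs, hsmooth, -, h1⟩ :=
    exists_contDiff_tsupport_subset (n := ⊤) ((hU.inter hS.isOpen_compl).mem_nhds ⟨hyU, hiS⟩)
  refine ⟨h, hsmooth, hcs, hsub.trans inter_subset_left, fun k hk => ?_⟩
  split_ifs with hki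
  · rwa [hki]
  · exact image_eq_zero_of_notMem_tsupport fun hmem =>
      (hsub hmem).2 ⟨k, Finset.mem_erase.2 ⟨hki, hk⟩, rfl⟩

theorem eq_mul_sub_sum_of_sub_eq {c e : ℕ → ℝ} {C : ℝ} {N : ℕ} (h0 : c 0 = 0)
    (hstep : ∀ j < N, c (j + 1) - c j = C * (1 - e (j + 1))) :
    ∀ k ≤ N, c k = C * (k - ∑ j ∈ Finset.Icc 1 k, e j) := by
  intro k hk
  induction k with
  | zero => simp [h0]
  | succ k ih =>
    rw [Finset.sum_Icc_succ_top (Nat.le_add_left 1 k), Nat.cast_succ]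
    linear_combination hstep k hk + ih (by omega)

theorem sum_range_succ_mul_sub_eq {c w : ℕ → ℝ} {N : ℕ} (h0 : w 0 = 0) (hN : w (N + 1) = 0) :
    ∑ k ∈ Finset.range (N + 1), c k * (w (k + 1) - w k)
      = ∑ k ∈ Finset.range N, (c k - c (k + 1)) * w (k + 1) := by
  simp only [mul_sub, sub_mul, Finset.sum_sub_distrib]
  rw [Finset.sum_range_succ, Finset.sum_range_succ' (fun k => c k * w k), hN, h0]
  ring

theorem MemW.add {m : ℕ} {f g f' g' : ℝ → ℝ} (h : MemW m f g) (h' : MemW m f' g') :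
    MemW m (fun x => f x + f' x) (fun x => g x + g' x) := by
  obtain ⟨hf, hg, hfg, hg2⟩ := h
  obtain ⟨hf', hg', hfg', hg2'⟩ := h'
  refine ⟨hf.add hf', hg.add hg', fun x => ?_, hg2.add hg2'⟩
  rw [iteratedDeriv_fun_add hf.contDiffAt hf'.contDiffAt,
    iteratedDeriv_fun_add hf.contDiffAt hf'.contDiffAt, hfg, hfg',
    intervalIntegral.integral_add (hg.integrableOn_isCompact isCompact_uIcc).intervalIntegrable
      (hg'.integrableOn_isCompact isCompact_uIcc).intervalIntegrable]
  ring

theorem MemW.const_mul {m : ℕ} {f g : ℝ → ℝ} (h : MemW m f g) (c : ℝ) :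
    MemW m (fun x => c * f x) (fun x => c * g x) := by
  obtain ⟨hf, hg, hfg, hg2⟩ := h
  refine ⟨contDiff_const.mul hf, hg.smul c, fun x => ?_, hg2.const_mul c⟩
  rw [iteratedDeriv_const_mul_field, iteratedDeriv_const_mul_field, hfg,
    intervalIntegral.integral_const_mul]
  ring

theorem memW_of_contDiff {m : ℕ} {h : ℝ → ℝ} (hh : ContDiff ℝ (m + 1) h)
    (hc : HasCompactSupport h) : MemW (m + 1) h (iteratedDeriv (m + 1) h) := by
  have hcont : Continuous (iteratedDeriv (m + 1) h) := hh.continuous_iteratedDeriv' (m + 1)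
  refine ⟨hh.of_le (by simp), hcont.locallyIntegrable, fun x => ?_,
    hcont.memLp_of_hasCompactSupport (hc.iteratedDeriv _)⟩
  rw [Nat.add_sub_cancel, intervalIntegral.integral_eq_sub_of_hasDerivAt
    (fun t _ => hh.hasDerivAt_iteratedDeriv (by exact_mod_cast Nat.lt_succ_self m) t)
    (hcont.intervalIntegrable 0 x)]
  ring

section FirstVariation

variable (n : ℕ) (y r : ℕ → ℝ) (lam : ℝ)

theorem hasDerivAt_qll_add_smul (θ h : ℝ → ℝ) :
    HasDerivAt (fun t => qll n y r (fun x => θ x + t * h x))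
      ((1 / n) * ∑ j ∈ Finset.Icc 1 n, (1 - r j ^ 2 * exp (2 * θ (y j))) * h (y j)) 0 := by
  have hterm : ∀ j, HasDerivAt
      (fun t : ℝ => θ (y j) + t * h (y j) - 1 / 2 * r j ^ 2 * exp (2 * (θ (y j) + t * h (y j))))
      ((1 - r j ^ 2 * exp (2 * θ (y j))) * h (y j)) 0 := by
    intro j
    have hlin : HasDerivAt (fun t : ℝ => θ (y j) + t * h (y j)) (h (y j)) 0 := by
      simpa using ((hasDerivAt_id (0 : ℝ)).mul_const (h (y j))).const_add (θ (y j))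
    refine (hlin.fun_sub (((hlin.const_mul 2).exp).const_mul (1 / 2 * r j ^ 2))).congr_deriv ?_
    simp only [zero_mul, add_zero]
    ring
  exact (HasDerivAt.fun_sum fun j _ => hterm j).const_mul (1 / (n : ℝ))

theorem hasDerivAt_integral_sq_add_smul {g H : ℝ → ℝ} (hg : MemLp g 2 volume)
    (hH : MemLp H 2 volume) :
    HasDerivAt (fun t : ℝ => ∫ z, (g z + t * H z) ^ 2) (2 * ∫ z, g z * H z) 0 := by
  have hgH : Integrable (fun z => g z * H z) volume := hg.integrable_mul hH
  have hquad : ∀ t : ℝ, ∫ z, (g z + t * H z) ^ 2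
      = (∫ z, g z ^ 2) + t * (2 * ∫ z, g z * H z) + t ^ 2 * ∫ z, H z ^ 2 := by
    intro t
    have hexpand : (fun z => (g z + t * H z) ^ 2)
        = fun z => g z ^ 2 + ((2 * t) * (g z * H z) + t ^ 2 * H z ^ 2) := by
      funext z; ring
    rw [hexpand, integral_add, integral_add, integral_const_mul, integral_const_mul]
    · ring
    · exact hgH.const_mul _
    · exact hH.integrable_sq.const_mul _
    · exact hg.integrable_sq
    · exact (hgH.const_mul _).add (hH.integrable_sq.const_mul _)
  simp_rw [hquad]
  refine ((((hasDerivAt_id (0 : ℝ)).mul_const (2 * ∫ z, g z * H z)).const_add _).fun_add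
    ((hasDerivAt_pow 2 (0 : ℝ)).mul_const (∫ z, H z ^ 2))).congr_deriv ?_
  simp

theorem hasDerivAt_pqll_add_smul {θ g h H : ℝ → ℝ} (hg : MemLp g 2 volume)
    (hH : MemLp H 2 volume) :
    HasDerivAt (fun t => pqll n y r lam (fun x => θ x + t * h x) (fun x => g x + t * H x))
      ((1 / n) * ∑ j ∈ Finset.Icc 1 n, (1 - r j ^ 2 * exp (2 * θ (y j))) * h (y j)
        - lam * ∫ z, g z * H z) 0 := by
  refine ((hasDerivAt_qll_add_smul n y r θ h).fun_sub
    ((hasDerivAt_integral_sq_add_smul hg hH).const_mul (lam / 2))).congr_deriv ?_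
  ring

theorem euler_lagrange {m : ℕ} {θ g h : ℝ → ℝ} (hθ : MemW (m + 1) θ g)
    (hmax : ∀ f g', MemW (m + 1) f g' → pqll n y r lam f g' ≤ pqll n y r lam θ g)
    (hh : ContDiff ℝ (m + 1) h) (hc : HasCompactSupport h) :
    (1 / n) * ∑ j ∈ Finset.Icc 1 n, (1 - r j ^ 2 * exp (2 * θ (y j))) * h (y j)
      = lam * ∫ z, g z * iteratedDeriv (m + 1) h z := by
  have hmem : ∀ t : ℝ, MemW (m + 1) (fun x => θ x + t * h x)
      (fun x => g x + t * iteratedDeriv (m + 1) h x) :=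
    fun t => hθ.add ((memW_of_contDiff hh hc).const_mul t)
  have hmaxAt : IsLocalMax (fun t => pqll n y r lam (fun x => θ x + t * h x)
      (fun x => g x + t * iteratedDeriv (m + 1) h x)) 0 :=
    Eventually.of_forall fun t => by simpa using hmax _ _ (hmem t)
  exact sub_eq_zero.mp <| hmaxAt.hasDerivAt_eq_zero <|
    hasDerivAt_pqll_add_smul n y r lam hθ.2.2.2 (memW_of_contDiff hh hc).2.2.2

end FirstVariation

section IntegrationByParts

theorem integral_mul_deriv_eq_of_eq_add_integral {F f v : ℝ → ℝ} {c : ℝ}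
    (hf : LocallyIntegrable f volume) (hF : ∀ x, F x = F c + ∫ t in c..x, f t)
    (hv : ContDiff ℝ 1 v) (a b : ℝ) :
    ∫ x in a..b, F x * deriv v x = F b * v b - F a * v a - ∫ x in a..b, f x * v x := by
  have hint : ∀ u w, IntervalIntegrable f volume u w := fun u w =>
    (hf.integrableOn_isCompact isCompact_uIcc).intervalIntegrable
  have hFa : F = fun x => (F c + ∫ t in c..a, f t) + ∫ t in a..x, f t := by
    funext x
    rw [hF x, add_assoc, intervalIntegral.integral_add_adjacent_intervals (hint c a) (hint a x)]
  have hFac : AbsolutelyContinuousOnInterval F a b := by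
    rw [hFa]
    exact contDiffOn_const.absolutelyContinuousOnInterval.fun_add
      ((hint a b).absolutelyContinuousOnInterval_intervalIntegral left_mem_uIcc)
  rw [hFac.integral_mul_deriv_eq_deriv_mul hv.contDiffOn.absolutelyContinuousOnInterval]
  congr 1
  refine intervalIntegral.integral_congr_ae ?_
  filter_upwards [LocallyIntegrable.ae_hasDerivAt_integral hf] with x hx _
  rw [(((hx c).const_add (F c)).congr_of_eventuallyEq (Eventually.of_forall hF)).deriv]

theorem integral_iteratedDeriv_mul_iteratedDeriv {f v : ℝ → ℝ} {a b : ℝ} {N : ℕ}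
    (hf : ContDiff ℝ N f) (hv : ContDiff ℝ ∞ v) (ha : ∀ l, iteratedDeriv l v a = 0)
    (hb : ∀ l, iteratedDeriv l v b = 0) (i j k : ℕ) (hjk : k + j ≤ N) :
    ∫ x in a..b, iteratedDeriv k f x * iteratedDeriv (i + j) v x
      = (-1) ^ j * ∫ x in a..b, iteratedDeriv (k + j) f x * iteratedDeriv i v x := by
  induction j generalizing k with
  | zero => simp
  | succ j ih =>
    have hk : k < N := by omega
    rw [← add_assoc, intervalIntegral.integral_mul_deriv_eq_deriv_mul
      (fun x _ => hf.hasDerivAt_iteratedDeriv (by exact_mod_cast hk) x)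
      (fun x _ => hv.hasDerivAt_iteratedDeriv (by exact_mod_cast WithTop.coe_lt_top _) x)
      ((hf.continuous_iteratedDeriv _ (by exact_mod_cast hk)).intervalIntegrable _ _)
      ((hv.continuous_iteratedDeriv _ (by exact_mod_cast le_top)).intervalIntegrable _ _),
      ha, hb, ih (k + 1) (by omega), pow_succ, show k + 1 + j = k + (j + 1) by ring]
    ring

theorem integral_mul_iteratedDeriv_two_of_hasDerivAt_const {u w : ℝ → ℝ} {p q c : ℝ}
    (hpq : p ≤ q) (hu : ContinuousOn u (Icc p q)) (hu' : ∀ x ∈ Ioo p q, HasDerivAt u c x)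
    (hw : ContDiff ℝ 2 w) :
    ∫ x in p..q, u x * iteratedDeriv 2 w x
      = u q * iteratedDeriv 1 w q - u p * iteratedDeriv 1 w p - c * (w q - w p) := by
  have hw' : ∀ x, HasDerivAt w (iteratedDeriv 1 w x) x := fun x => by
    simpa using hw.hasDerivAt_iteratedDeriv (k := 0) (by norm_num) x
  rw [intervalIntegral.integral_mul_deriv_eq_deriv_mul_of_hasDerivAt (u' := fun _ => c)
      (by rwa [uIcc_of_le hpq]) ((hw.continuous_iteratedDeriv 1 (by norm_num)).continuousOn)
      (by rwa [min_eq_left hpq, max_eq_right hpq])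
      (fun x _ => hw.hasDerivAt_iteratedDeriv (by norm_num) x) intervalIntegrable_const
      ((hw.continuous_iteratedDeriv 2 le_rfl).intervalIntegrable _ _),
    intervalIntegral.integral_const_mul, intervalIntegral.integral_eq_sub_of_hasDerivAt
      (fun x _ => hw' x) ((hw.continuous_iteratedDeriv 1 (by norm_num)).intervalIntegrable _ _)]

theorem integral_mul_iteratedDeriv_two_of_piecewise_affine {u w : ℝ → ℝ} {T c : ℕ → ℝ}
    {N : ℕ} (hT : ∀ k < N, T k ≤ T (k + 1)) (hu : Continuous u)
    (hu' : ∀ k < N, ∀ x ∈ Ioo (T k) (T (k + 1)), HasDerivAt u (c k) x) (hw : ContDiff ℝ 2 w) :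
    ∫ x in T 0..T N, u x * iteratedDeriv 2 w x
      = u (T N) * iteratedDeriv 1 w (T N) - u (T 0) * iteratedDeriv 1 w (T 0)
        - ∑ k ∈ Finset.range N, c k * (w (T (k + 1)) - w (T k)) := by
  induction N with
  | zero => simp
  | succ N ih =>
    have hint : ∀ p q, IntervalIntegrable (fun x => u x * iteratedDeriv 2 w x) volume p q :=
      (hu.mul (hw.continuous_iteratedDeriv 2 le_rfl)).intervalIntegrable
    rw [← intervalIntegral.integral_add_adjacent_intervals (hint _ (T N)) (hint _ _),
      ih (fun k hk => hT k (by omega)) (fun k hk => hu' k (by omega)),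
      integral_mul_iteratedDeriv_two_of_hasDerivAt_const (hT N (by omega)) hu.continuousOn
        (hu' N (by omega)) hw, Finset.sum_range_succ]
    ring

end IntegrationByParts

section Splines

theorem hasDerivAt_iteratedDeriv_of_eventuallyEq_eval {f : ℝ → ℝ} {p : Polynomial ℝ} {x : ℝ}
    (hfp : f =ᶠ[𝓝 x] fun z => p.eval z) (k : ℕ) :
    HasDerivAt (iteratedDeriv k f) (iteratedDeriv (k + 1) f x) x := by
  have hp : ContDiff ℝ ∞ fun z => p.eval z := by simpa using p.contDiff_aeval (𝕜 := ℝ) ∞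
  rw [(hfp.iteratedDeriv (k + 1)).eq_of_nhds]
  exact (hp.hasDerivAt_iteratedDeriv (by exact_mod_cast WithTop.coe_lt_top _) x)
    |>.congr_of_eventuallyEq (hfp.iteratedDeriv k)

def extendedKnots (n : ℕ) (y : ℕ → ℝ) (a b : ℝ) (k : ℕ) : ℝ :=
  if k = 0 then a else if k ≤ n then y k else b

variable {n : ℕ} {y : ℕ → ℝ} {a b : ℝ}

@[simp]
theorem extendedKnots_zero : extendedKnots n y a b 0 = a := rfl

@[simp]
theorem extendedKnots_add_one_self : extendedKnots n y a b (n + 1) = b := by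
  simp [extendedKnots]

theorem extendedKnots_of_pos_of_le {k : ℕ} (hk : 1 ≤ k) (hkn : k ≤ n) :
    extendedKnots n y a b k = y k := by
  simp [extendedKnots, hkn, Nat.one_le_iff_ne_zero.mp hk]

theorem strictMonoOn_extendedKnots (hy : StrictMonoOn y (Icc 1 n)) (hn : 1 ≤ n) (ha : a < y 1)
    (hb : y n < b) : StrictMonoOn (extendedKnots n y a b) (Iic (n + 1)) := by
  intro i hi j hj hij
  simp only [mem_Iic] at hi hj
  unfold extendedKnots
  split_ifs <;> try omega
  · exact ha.trans_le (hy.monotoneOn ⟨le_rfl, hn⟩ ⟨by omega, by omega⟩ (by omega))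
  · exact ha.trans_le ((hy.monotoneOn ⟨le_rfl, hn⟩ ⟨hn, le_rfl⟩ hn).trans hb.le)
  · exact hy ⟨by omega, by omega⟩ ⟨by omega, by omega⟩ hij
  · exact (hy.monotoneOn ⟨by omega, by omega⟩ ⟨hn, le_rfl⟩ (by omega)).trans_lt hb

variable {m : ℕ} {θ g gsp : ℝ → ℝ}

theorem NatSpline.hasDerivAt_of_mem_Ioo (hs : NatSpline n (m + 1) y θ gsp)
    (hy : StrictMonoOn y (Icc 1 n)) (hn : 1 ≤ n) (ha : a < y 1) (hb : y n < b) {k : ℕ}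
    (hk : k ≤ n) {x : ℝ} (hx : x ∈ Ioo (extendedKnots n y a b k) (extendedKnots n y a b (k + 1))) :
    HasDerivAt (iteratedDeriv (2 * m) θ) (gsp (extendedKnots n y a b k)) x := by
  obtain ⟨-, ⟨p₀, -, hp₀⟩, hpk, ⟨pₙ, -, hpₙ⟩, -, hzero, hderiv, hconst⟩ := hs
  have hmono := strictMonoOn_extendedKnots hy hn ha hb
  have hleft : 1 ≤ k → y k < x := fun hk1 => by
    simpa only [extendedKnots_of_pos_of_le hk1 hk] using hx.1
  have hright : k < n → x < y (k + 1) := fun hkn => by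
    simpa only [extendedKnots_of_pos_of_le (Nat.le_add_left 1 k) hkn] using hx.2
  have hnotknot : ∀ i, 1 ≤ i → i ≤ n → x ≠ y i := by
    intro i hi hin
    rw [← extendedKnots_of_pos_of_le (y := y) (a := a) (b := b) hi hin]
    rcases le_or_gt i k with hik | hki
    · exact ((hmono.monotoneOn (by simp; omega) (by simp; omega) hik).trans_lt hx.1).ne'
    · exact (hx.2.trans_le (hmono.monotoneOn (by simp; omega) (by simp; omega) hki)).ne
  obtain ⟨p, hp⟩ : ∃ p : Polynomial ℝ, θ =ᶠ[𝓝 x] fun z => p.eval z := by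
    rcases Nat.eq_zero_or_pos k with rfl | hk1
    · exact ⟨p₀, eventually_of_mem (Iio_mem_nhds (hright hn)) hp₀⟩
    rcases hk.eq_or_lt with rfl | hkn
    · exact ⟨pₙ, eventually_of_mem (Ioi_mem_nhds (hleft hk1)) hpₙ⟩
    obtain ⟨p, -, hp⟩ := hpk k hk1 hkn
    exact ⟨p, eventually_of_mem (Ioo_mem_nhds (hleft hk1) (hright hkn)) fun z hz =>
      hp z hz.1 hz.2⟩
  have hgsp : gsp x = gsp (extendedKnots n y a b k) := by
    rcases Nat.eq_zero_or_pos k with rfl | hk1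
    · rw [hzero x (Or.inl (hright hn)), extendedKnots_zero, hzero a (Or.inl ha)]
    · rw [hconst k hk1 hk x (hleft hk1).le hright, extendedKnots_of_pos_of_le hk1 hk]
  rw [← hgsp, hderiv x hnotknot, show 2 * (m + 1) - 1 = 2 * m + 1 by omega]
  exact hasDerivAt_iteratedDeriv_of_eventuallyEq_eval hp _

theorem NatSpline.integral_mul_iteratedDeriv {h : ℝ → ℝ} (hs : NatSpline n (m + 1) y θ gsp)
    (hθ : MemW (m + 1) θ g) (hy : StrictMonoOn y (Icc 1 n)) (hn : 1 ≤ n) (ha : a < y 1)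
    (hb : y n < b) (hh : ContDiff ℝ ∞ h) (hsupp : tsupport h ⊆ Ioo a b) :
    ∫ z, g z * iteratedDeriv (m + 1) h z = (-1) ^ m * ∑ k ∈ Finset.range n,
      (gsp (extendedKnots n y a b k) - gsp (extendedKnots n y a b (k + 1))) * h (y (k + 1)) := by
  have hθC : ContDiff ℝ (2 * m : ℕ) θ := by
    simpa only [show 2 * (m + 1) - 2 = 2 * m by omega] using hs.1
  have hva : ∀ l, iteratedDeriv l h a = 0 :=
    iteratedDeriv_eq_zero_of_notMem_tsupport fun ha' => lt_irrefl a (hsupp ha').1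
  have hvb : ∀ l, iteratedDeriv l h b = 0 :=
    iteratedDeriv_eq_zero_of_notMem_tsupport fun hb' => lt_irrefl b (hsupp hb').2
  have hsupp' : Function.support (fun z => g z * iteratedDeriv (m + 1) h z) ⊆ Ioc a b :=
    fun z hz => Ioo_subset_Ioc_self <| hsupp <| by_contra fun hz' =>
      hz (by simp only [iteratedDeriv_eq_zero_of_notMem_tsupport hz', mul_zero])
  have hparts : ∫ z in a..b, g z * iteratedDeriv (m + 1) h z
      = -∫ z in a..b, iteratedDeriv m θ z * iteratedDeriv (m + 2) h z := by
    have hH : ContDiff ℝ 1 (iteratedDeriv (m + 1) h) := by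
      rw [iteratedDeriv_eq_iterate]
      exact (hh.iterate_deriv _).of_le (by exact_mod_cast le_top)
    have := integral_mul_deriv_eq_of_eq_add_integral hθ.2.1 hθ.2.2.1 hH a b
    rw [← iteratedDeriv_succ, hva, hvb] at this
    simp only [Nat.add_sub_cancel] at this
    linarith
  have hpieces := integral_mul_iteratedDeriv_two_of_piecewise_affine (N := n + 1)
    (fun k hk => ((strictMonoOn_extendedKnots hy hn ha hb) (by simp; omega)
      (by simp; omega) (Nat.lt_succ_self k)).le)
    (hθC.continuous_iteratedDeriv _ le_rfl)
    (fun k hk x hx => hs.hasDerivAt_of_mem_Ioo hy hn ha hb (by omega) hx)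
    (hh.of_le (by norm_cast))
  simp only [extendedKnots_zero, extendedKnots_add_one_self, hva, hvb] at hpieces
  calc ∫ z, g z * iteratedDeriv (m + 1) h z
      = ∫ z in a..b, g z * iteratedDeriv (m + 1) h z :=
        (intervalIntegral.integral_eq_integral_of_support_subset hsupp').symm
    _ = -((-1) ^ m * ∫ z in a..b, iteratedDeriv (2 * m) θ z * iteratedDeriv 2 h z) := by
        rw [hparts, add_comm m 2, two_mul,
          integral_iteratedDeriv_mul_iteratedDeriv hθC hh hva hvb 2 m m (by omega)]
    _ = (-1) ^ m * ∑ k ∈ Finset.range (n + 1), gsp (extendedKnots n y a b k)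
          * (h (extendedKnots n y a b (k + 1)) - h (extendedKnots n y a b k)) := by
        rw [hpieces]
        ring
    _ = _ := by
        rw [sum_range_succ_mul_sub_eq (w := fun k => h (extendedKnots n y a b k))
          (by simpa using hva 0) (by simpa using hvb 0)]
        refine congrArg _ (Finset.sum_congr rfl fun k hk => ?_)
        rw [extendedKnots_of_pos_of_le (Nat.le_add_left 1 k) (Finset.mem_range.mp hk)]

end Splines

theorem NatSpline.sub_eq_of_forall_pqll_le {n m : ℕ} {lam : ℝ} {y r : ℕ → ℝ}
    {θ g gsp : ℝ → ℝ} (hs : NatSpline n (m + 1) y θ gsp) (hθ : MemW (m + 1) θ g)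
    (hmax : ∀ f g', MemW (m + 1) f g' → pqll n y r lam f g' ≤ pqll n y r lam θ g)
    (hy : StrictMonoOn y (Icc 1 n)) (hlam : lam ≠ 0) {j : ℕ} (hj : j < n) :
    gsp (extendedKnots n y (y 1 - 1) (y n + 1) (j + 1))
        - gsp (extendedKnots n y (y 1 - 1) (y n + 1) j)
      = (-1) ^ (m + 1) / (n * lam) * (1 - r (j + 1) ^ 2 * exp (2 * θ (y (j + 1)))) := by
  set c := fun k => gsp (extendedKnots n y (y 1 - 1) (y n + 1) k)
  have hn : 1 ≤ n := by omega
  have hj' : j + 1 ∈ Finset.Icc 1 n := Finset.mem_Icc.2 ⟨Nat.le_add_left 1 j, hj⟩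
  have hyj : y (j + 1) ∈ Ioo (y 1 - 1) (y n + 1) := by
    have h1 := hy.monotoneOn ⟨le_rfl, hn⟩ (Finset.mem_Icc.1 hj') (Nat.le_add_left 1 j)
    have h2 := hy.monotoneOn (Finset.mem_Icc.1 hj') ⟨hn, le_rfl⟩ hj
    constructor <;> linarith
  obtain ⟨h, hsmooth, hcs, hsub, hδ⟩ := exists_contDiff_tsupport_subset_apply_eq_ite
    (by rw [Finset.coe_Icc]; exact hy.injOn) isOpen_Ioo hj' hyj
  have hEL := euler_lagrange n y r lam hθ hmax (hsmooth.of_le (by exact_mod_cast le_top)) hcs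
  rw [hs.integral_mul_iteratedDeriv hθ hy hn (by linarith) (by linarith) hsmooth hsub,
    Finset.sum_eq_single_of_mem (j + 1) hj' fun i hi hij => by rw [hδ i hi, if_neg hij, mul_zero],
    Finset.sum_eq_single_of_mem j (Finset.mem_range.2 hj) fun i hi hij => by
      rw [hδ (i + 1) (Finset.mem_Icc.2 ⟨Nat.le_add_left 1 i, Finset.mem_range.1 hi⟩),
        if_neg (by omega), mul_zero],
    hδ _ hj', if_pos rfl, mul_one, mul_one] at hEL
  have hn0 : (n : ℝ) ≠ 0 := by exact_mod_cast (by omega : n ≠ 0)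
  have hsq : ((-1 : ℝ) ^ m) ^ 2 = 1 := by rw [← pow_mul, mul_comm, pow_mul]; norm_num
  rw [div_mul_eq_mul_div, eq_div_iff (mul_ne_zero hn0 hlam), pow_succ]
  field_simp at hEL
  linear_combination (-1 : ℝ) ^ m * hEL + (n * lam * (c j - c (j + 1))) * hsq

theorem statement4_general (n m : ℕ) (hm : 1 ≤ m) (lam : ℝ) (hlam : 0 < lam)
    (y r : ℕ → ℝ) (hy : ∀ i j, 1 ≤ i → i < j → j ≤ n → y i < y j)
    (θs gθ gsp : ℝ → ℝ) (hθ : MemW m θs gθ)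
    (hmax : ∀ f g : ℝ → ℝ, MemW m f g → pqll n y r lam f g ≤ pqll n y r lam θs gθ)
    (hspline : NatSpline n m y θs gsp) :
    ∀ k, 1 ≤ k → k ≤ n → ∀ x : ℝ, y k ≤ x → (k < n → x < y (k + 1)) →
      gsp x = ((-1 : ℝ) ^ m / (n * lam)) *
        (k - ∑ j ∈ Finset.Icc 1 k, (r j) ^ 2 * Real.exp (2 * θs (y j))) := by
  intro k hk hkn x hkx hxk
  obtain ⟨m, rfl⟩ : ∃ m', m = m' + 1 := ⟨m - 1, by omega⟩
  have hy' : StrictMonoOn y (Icc 1 n) := fun i hi j hj hij => hy i j hi.1 hij hj.2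
  have ⟨_, _, _, _, _, hzero, _, hconst⟩ := hspline
  have hc0 : gsp (extendedKnots n y (y 1 - 1) (y n + 1) 0) = 0 := hzero _ (Or.inl (by simp))
  rw [hconst k hk hkn x hkx hxk,
    ← extendedKnots_of_pos_of_le (y := y) (a := y 1 - 1) (b := y n + 1) hk hkn]
  exact eq_mul_sub_sum_of_sub_eq (c := fun j => gsp (extendedKnots n y (y 1 - 1) (y n + 1) j))
    (e := fun j => r j ^ 2 * exp (2 * θs (y j))) hc0
    (fun j hj => hspline.sub_eq_of_forall_pqll_le hθ hmax hy' hlam.ne' hj) k hkn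

/-- if the maximizer `θ*` of the penalized quasi-log-likelihood over
`W^{m,2}` has the natural-spline structure, then for every `k ∈ {1, …, n}` and every
`x ∈ [y k, y (k+1))` (with `y (n+1) = +∞`),
`θ*^{(2m−1)}(x) = ((−1)^m / (n λ)) (k − ∑_{j=1}^k r_j² e^{2θ*(y_j)})`. -/
theorem statement4 (n m : ℕ) (hn : 1 ≤ n) (hm : 1 ≤ m) (lam : ℝ) (hlam : 0 < lam)
    (y r : ℕ → ℝ) (hy : ∀ i j, 1 ≤ i → i < j → j ≤ n → y i < y j)
    (θs gθ gsp : ℝ → ℝ) (hθ : MemW m θs gθ)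
    (hmax : ∀ f g : ℝ → ℝ, MemW m f g → pqll n y r lam f g ≤ pqll n y r lam θs gθ)
    (hspline : NatSpline n m y θs gsp) :
    ∀ k, 1 ≤ k → k ≤ n → ∀ x : ℝ, y k ≤ x → (k < n → x < y (k + 1)) →
      gsp x = ((-1 : ℝ) ^ m / (n * lam)) *
        (k - ∑ j ∈ Finset.Icc 1 k, (r j) ^ 2 * Real.exp (2 * θs (y j))) :=
  statement4_general n m hm lam hlam y r hy θs gθ gsp hθ hmax hspline
end

section
/- Assume m ≥ 2. If θ* ∈ W^{m,2} maximizes pqll over W^{m,2}, then ∑_{j=1}^n y_j r_j² exp(2 θ*(y_j)) = ∑_{j=1}^n y_j. -/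
open MeasureTheory Real Filter Set

/- At a maximizer, perturbing `θ*` by `t z` leaves the penalty unchanged, since `z` has vanishing
`m`-th derivative for `m ≥ 2`. So `t ↦ qll(θ* + t z)` has a maximum at `t = 0`, and its derivative
there, `(1/n) ∑ (y_j - y_j r_j² e^{2θ*(y_j)})`, must vanish. -/

lemma MemW.add_of_iteratedDeriv_pred_const {m : ℕ} {f g h : ℝ → ℝ} (hf : MemW m f g)
    (hh : ContDiff ℝ (m - 1 : ℕ) h)
    (hconst : ∀ x, iteratedDeriv (m - 1) h x = iteratedDeriv (m - 1) h 0) :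
    MemW m (fun z => f z + h z) g := by
  obtain ⟨hfC, hgint, hftc, hgL2⟩ := hf
  refine ⟨hfC.add hh, hgint, fun x => ?_, hgL2⟩
  rw [iteratedDeriv_fun_add hfC.contDiffAt hh.contDiffAt,
    iteratedDeriv_fun_add hfC.contDiffAt hh.contDiffAt, hftc x, hconst x]
  ring

lemma MemW.add_const_mul_id {m : ℕ} (hm : 2 ≤ m) {f g : ℝ → ℝ} (hf : MemW m f g) (t : ℝ) :
    MemW m (fun z => f z + t * z) g :=
  hf.add_of_iteratedDeriv_pred_const (contDiff_const.mul contDiff_id) fun x => by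
    simp only [iteratedDeriv_const_mul_field t (fun z => z), iteratedDeriv_fun_id,
      show m - 1 ≠ 0 by omega, if_false]

lemma hasDerivAt_qll_add_mul (n : ℕ) (y r : ℕ → ℝ) (θ δ : ℝ → ℝ) :
    HasDerivAt (fun t => qll n y r (fun z => θ z + t * δ z))
      ((1 / n) * ∑ j ∈ Finset.Icc 1 n,
        (δ (y j) - (r j) ^ 2 * Real.exp (2 * θ (y j)) * δ (y j))) 0 := by
  refine (HasDerivAt.fun_sum fun j _ => ?_).const_mul (1 / n : ℝ)
  have hlin : HasDerivAt (fun t => θ (y j) + t * δ (y j)) (δ (y j)) 0 := by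
    simpa using ((hasDerivAt_id (0 : ℝ)).mul_const (δ (y j))).const_add (θ (y j))
  convert hlin.sub (((hlin.const_mul 2).exp).const_mul ((1 / 2) * (r j) ^ 2)) using 1
  · rfl
  · simp only [zero_mul, add_zero]
    ring

theorem statement6_general (n m : ℕ) (hn : 1 ≤ n) (hm : 2 ≤ m) (lam : ℝ)
    (y r : ℕ → ℝ)
    (θs gθ : ℝ → ℝ) (hθ : MemW m θs gθ)
    (hmax : ∀ f g : ℝ → ℝ, MemW m f g → pqll n y r lam f g ≤ pqll n y r lam θs gθ) :
    ∑ j ∈ Finset.Icc 1 n, y j * ((r j) ^ 2 * Real.exp (2 * θs (y j)))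
      = ∑ j ∈ Finset.Icc 1 n, y j := by
  have hlocMax : IsLocalMax (fun t => qll n y r (fun z => θs z + t * z)) 0 :=
    Eventually.of_forall fun t => by
      simpa [pqll] using hmax _ _ (hθ.add_const_mul_id hm t)
  have hcrit := hlocMax.hasDerivAt_eq_zero (hasDerivAt_qll_add_mul n y r θs fun z => z)
  have hn0 : (1 / n : ℝ) ≠ 0 := by positivity
  rw [mul_eq_zero, or_iff_right hn0, Finset.sum_sub_distrib, sub_eq_zero] at hcrit
  simpa only [mul_comm] using hcrit.symm

/-- for `m ≥ 2`, at a maximizer `θ*` of the penalized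
quasi-log-likelihood over `W^{m,2}`, `∑_{j=1}^n y_j r_j² e^{2θ*(y_j)} = ∑_{j=1}^n y_j`. -/
theorem statement6 (n m : ℕ) (hn : 1 ≤ n) (hm : 2 ≤ m) (lam : ℝ) (hlam : 0 < lam)
    (y r : ℕ → ℝ) (hy : ∀ i j, 1 ≤ i → i < j → j ≤ n → y i < y j)
    (θs gθ : ℝ → ℝ) (hθ : MemW m θs gθ)
    (hmax : ∀ f g : ℝ → ℝ, MemW m f g → pqll n y r lam f g ≤ pqll n y r lam θs gθ) :
    ∑ j ∈ Finset.Icc 1 n, y j * ((r j) ^ 2 * Real.exp (2 * θs (y j)))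
      = ∑ j ∈ Finset.Icc 1 n, y j :=
  statement6_general n m hn hm lam y r θs gθ hθ hmax
end
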